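/- arXiv:1508.07289 — 4 statements merged into one kernel-verified Lean document; each statement's English description precedes it below -/
import Mathlib

section
/- Let 0 < a < 1 and let k be a natural number with k ≥ exp(1/a). Define for each i with 1 ≤ i ≤ k the function f_i(t) = i·t − i·a·H_{i−1}, where H_j is the j-th harmonic number. Then for every t ∈ [0, 1] there exists i with 1 ≤ i ≤ k such that f_i(t) mod 1 ∈ [0, a]. -/
/-!
Runner `i` sweeps the arc `[0, a]` during the time window `[a H_{i-1}, a H_i]`, and these
windows tile `[0, a H_k]`. Since `H_k ≥ log (k + 1) > 1/a`, they cover the whole period `[0, 1]`.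
-/

noncomputable def H (n : ℕ) : ℝ := ∑ i ∈ Finset.range n, 1 / (i + 1 : ℝ)

lemma H_eq_harmonic (n : ℕ) : H n = harmonic n := by
  simp [H, harmonic]

lemma H_succ (n : ℕ) : H (n + 1) = H n + 1 / ((n : ℝ) + 1) :=
  Finset.sum_range_succ _ _

lemma one_div_le_H_of_exp_one_div_le {a : ℝ} {k : ℕ} (hk : Real.exp (1 / a) ≤ k) :
    1 / a ≤ H k := calc
  1 / a ≤ Real.log k := by
    rw [← Real.log_exp (1 / a)]
    exact Real.log_le_log (Real.exp_pos _) hk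
  _ ≤ Real.log ↑(k + 1) := by
    have hk0 : (0 : ℝ) < k := (Real.exp_pos _).trans_le hk
    exact Real.log_le_log hk0 (by push_cast; linarith)
  _ ≤ H k := H_eq_harmonic k ▸ log_add_one_le_harmonic k

lemma exists_le_and_le_succ {α : Type*} [LinearOrder α] (s : ℕ → α) {t : α} (h0 : s 0 ≤ t) :
    ∀ n, t ≤ s (n + 1) → ∃ m ≤ n, s m ≤ t ∧ t ≤ s (m + 1)
  | 0, ht => ⟨0, le_rfl, h0, ht⟩
  | n + 1, ht => by
    rcases le_or_gt t (s (n + 1)) with hle | hlt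
    · obtain ⟨m, hmn, hm⟩ := exists_le_and_le_succ s h0 n hle
      exact ⟨m, hmn.trans n.le_succ, hm⟩
    · exact ⟨n + 1, le_rfl, hlt.le, ht⟩

lemma fract_mem_Icc_of_mem_Icc {x a : ℝ} (ha : a < 1) (hx : x ∈ Set.Icc 0 a) :
    Int.fract x ∈ Set.Icc 0 a := by
  rwa [Int.fract_eq_self.mpr ⟨hx.1, hx.2.trans_lt ha⟩]

lemma runner_mem_Icc {a t : ℝ} {m : ℕ} (hlow : a * H m ≤ t)
    (hhigh : t ≤ a * H (m + 1)) :
    ((m + 1 : ℕ) : ℝ) * t - ((m + 1 : ℕ) : ℝ) * a * H m ∈ Set.Icc 0 a := by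
  have hm : (0 : ℝ) < m + 1 := by positivity
  rw [H_succ, mul_add, mul_one_div] at hhigh
  have hstep : ((m : ℝ) + 1) * (t - a * H m) ≤ a := by
    rw [← le_div_iff₀' hm]
    linarith
  push_cast
  exact ⟨by nlinarith, by linarith⟩

theorem covering_on_period (a : ℝ) (ha0 : 0 < a) (ha1 : a < 1) (k : ℕ)
    (hk : (k : ℝ) ≥ Real.exp (1 / a)) :
    ∀ t ∈ Set.Icc (0 : ℝ) 1, ∃ i : ℕ, 1 ≤ i ∧ i ≤ k ∧
      Int.fract ((i : ℝ) * t - (i : ℝ) * a * H (i - 1)) ∈ Set.Icc 0 a := by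
  intro t ⟨ht0, ht1⟩
  obtain ⟨n, rfl⟩ : ∃ n, k = n + 1 := Nat.exists_eq_add_one.mpr <| by
    exact_mod_cast (Real.exp_pos _).trans_le hk
  have hcover : t ≤ a * H (n + 1) := calc
    t ≤ a * (1 / a) := by rwa [mul_one_div_cancel ha0.ne']
    _ ≤ a * H (n + 1) := mul_le_mul_of_nonneg_left (one_div_le_H_of_exp_one_div_le hk) ha0.le
  obtain ⟨m, hmn, hlow, hhigh⟩ :=
    exists_le_and_le_succ (fun m ↦ a * H m) (by simpa [H] using ht0) n hcover
  refine ⟨m + 1, Nat.le_add_left 1 m, by omega, ?_⟩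
  rw [Nat.add_sub_cancel]
  exact fract_mem_Icc_of_mem_Icc ha1 (runner_mem_Icc hlow hhigh)
end

section
/- If real numbers ξ_1, ..., ξ_k are rationally independent (linearly independent over ℚ), α_1, ..., α_k are arbitrary reals, and T, ε > 0, then there exists a real t > T and integers p_1, ..., p_k such that |t·ξ_m − p_m − α_m| ≤ ε for all m = 1, ..., k. -/
/-!
Bohr's argument. Put `ξ₀ = α₀ = 0` and `F(t) = ∑_{m=0}^{k} e(t ξ_m - α_m)` with `e(x) = exp(2πix)`.
If no `t > T` worked, then for each `t > T` one of the unit vectors `e(t ξ_m - α_m)` would be a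
fixed distance away from `e(0) = 1`, so `|F(t)| ≤ M < k + 1` for all `t > T`. On the other hand `|F|^{2p}`
is a trigonometric polynomial whose frequencies are differences of sums of `p` of the `ξ_m`; by
the affine independence of `0, ξ_1, …, ξ_k` over `ℚ` its constant term is the number of pairs of
words of length `p` over `{0, …, k}` with the same letter counts, which by Cauchy–Schwarz is at
least `(k + 1)^{2p} / (p + 1)^{k + 1}`. The constant term is the mean value of `|F|^{2p}` over
`t > T`, so it is at most `M^{2p}`, which is impossible for large `p`.
-/

open Finset Complex
open scoped Real

section Occurrences

variable {α β ι : Type*} [Fintype α]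

theorem sq_card_le_card_image_mul_card_filter_eq [DecidableEq β] (f : α → β) :
    Fintype.card α ^ 2 ≤ #(univ.image f) * #{x : α × α | f x.1 = f x.2} := by
  have hpairs : #{x : α × α | f x.1 = f x.2} = ∑ b ∈ univ.image f, #{a | f a = b} ^ 2 := by
    rw [card_eq_sum_card_fiberwise (f := fun x : α × α => f x.1) (t := univ.image f)
      fun x _ => mem_image_of_mem f (mem_univ _)]
    refine sum_congr rfl fun b _ => ?_
    rw [sq, ← card_product]
    congr 1
    ext x
    simp only [mem_filter, mem_univ, true_and, mem_product]
    constructor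
    · rintro ⟨h, rfl⟩; exact ⟨rfl, h.symm⟩
    · rintro ⟨h1, h2⟩; exact ⟨h1.trans h2.symm, h1⟩
  rw [hpairs, ← card_univ, card_eq_sum_card_image f]
  exact sq_sum_le_card_mul_sum_sq

variable [DecidableEq ι]

def occurrences (u : α → ι) (i : ι) : ℕ := #{a | u a = i}

theorem sum_occurrences [Fintype ι] (u : α → ι) : ∑ i, occurrences u i = Fintype.card α := by
  rw [← card_univ, card_eq_sum_card_fiberwise fun a _ => mem_univ (u a)]
  rfl

theorem sum_comp_eq_sum_occurrences_smul [Fintype ι] {M : Type*} [AddCommMonoid M] (f : ι → M)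
    (u : α → ι) :
    ∑ a, f (u a) = ∑ i, occurrences u i • f i := by
  rw [← sum_fiberwise univ u]
  refine sum_congr rfl fun i _ => ?_
  rw [occurrences, ← sum_const]
  exact sum_congr rfl fun a ha => by rw [(mem_filter.1 ha).2]

theorem card_image_occurrences_le [DecidableEq α] [Fintype ι] :
    #(univ.image (occurrences (α := α) (ι := ι))) ≤ (Fintype.card α + 1) ^ Fintype.card ι := by
  calc #(univ.image (occurrences (α := α) (ι := ι)))
      ≤ #(Fintype.piFinset fun _ : ι => range (Fintype.card α + 1)) := by
        refine card_le_card fun c hc => ?_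
        obtain ⟨u, -, rfl⟩ := mem_image.1 hc
        simpa [Nat.lt_succ_iff, occurrences] using fun i => card_le_univ (s := {a | u a = i})
    _ = _ := by simp

theorem occurrences_eq_of_sum_eq [Fintype ι] {ω : ι → ℝ} (hω : AffineIndependent ℚ ω)
    {u v : α → ι} (h : ∑ a, ω (u a) = ∑ a, ω (v a)) : occurrences u = occurrences v := by
  funext i
  have := hω.eq_of_sum_eq_sum (s := univ) (w₁ := fun i => (occurrences u i : ℚ))
    (w₂ := fun i => (occurrences v i : ℚ)) ?_ ?_ i (mem_univ i)
  · exact_mod_cast this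
  · simp only [← Nat.cast_sum, sum_occurrences]
  · simpa only [Nat.cast_smul_eq_nsmul, ← sum_comp_eq_sum_occurrences_smul] using h

end Occurrences

theorem norm_intervalIntegral_exp_mul_I_le {c : ℝ} (hc : c ≠ 0) (a b : ℝ) :
    ‖∫ t in a..b, cexp (c * t * I)‖ ≤ 2 / |c| := by
  have hcI : (c : ℂ) * I ≠ 0 := mul_ne_zero (ofReal_ne_zero.2 hc) I_ne_zero
  have hnorm (x : ℝ) : ‖cexp (c * I * x)‖ = 1 := by
    rw [mul_right_comm, ← ofReal_mul, norm_exp_ofReal_mul_I]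
  simp_rw [mul_right_comm _ _ I]
  rw [integral_exp_mul_complex hcI, norm_div, norm_mul, norm_I, mul_one, norm_real,
    Real.norm_eq_abs]
  gcongr
  calc _ ≤ ‖cexp (c * I * b)‖ + ‖cexp (c * I * a)‖ := norm_sub_le _ _
    _ = 2 := by rw [hnorm, hnorm]; norm_num

theorem norm_sum_filter_eq_zero_le_of_norm_sum_exp_le {κ : Type*} (s : Finset κ) (a : κ → ℂ)
    (ν : κ → ℝ) {T B : ℝ}
    (h : ∀ t, T < t → ‖∑ j ∈ s, a j * cexp (ν j * t * I)‖ ≤ B) :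
    ‖∑ j ∈ s with ν j = 0, a j‖ ≤ B := by
  set C := ∑ j ∈ s with ν j ≠ 0, ‖a j‖ * (2 / |ν j|)
  have hmean (S : ℝ) (hS : 0 < S) : S * ‖∑ j ∈ s with ν j = 0, a j‖ ≤ S * B + C := by
    have hint : ∫ t in T..T + S, ∑ j ∈ s, a j * cexp (ν j * t * I) =
        S * ∑ j ∈ s with ν j = 0, a j +
          ∑ j ∈ s with ν j ≠ 0, a j * ∫ t in T..T + S, cexp (ν j * t * I) := by
      rw [intervalIntegral.integral_finsetSum fun j _ =>
        (Continuous.intervalIntegrable (by fun_prop) _ _), mul_sum,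
        ← sum_filter_add_sum_filter_not s (fun j => ν j = 0)]
      congr 1
      · refine sum_congr rfl fun j hj => ?_
        simp [(mem_filter.1 hj).2, mul_comm]
      · exact sum_congr rfl fun j _ => intervalIntegral.integral_const_mul _ _
    have hG : ‖∫ t in T..T + S, ∑ j ∈ s, a j * cexp (ν j * t * I)‖ ≤ B * S := by
      have := intervalIntegral.norm_integral_le_of_norm_le_const (a := T) (b := T + S)
        (C := B) (f := fun t => ∑ j ∈ s, a j * cexp (ν j * t * I)) fun t ht =>
          h t (by rw [Set.uIoc_of_le (by linarith)] at ht; exact ht.1)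
      simpa [abs_of_pos hS] using this
    have hrest : ‖∑ j ∈ s with ν j ≠ 0, a j * ∫ t in T..T + S, cexp (ν j * t * I)‖ ≤ C := by
      refine (norm_sum_le _ _).trans (sum_le_sum fun j hj => ?_)
      rw [norm_mul]
      gcongr
      exact norm_intervalIntegral_exp_mul_I_le (mem_filter.1 hj).2 _ _
    calc S * ‖∑ j ∈ s with ν j = 0, a j‖ = ‖(S : ℂ) * ∑ j ∈ s with ν j = 0, a j‖ := by
          rw [norm_mul, norm_real, Real.norm_of_nonneg hS.le]
      _ ≤ B * S + C := by
          rw [eq_sub_of_add_eq hint.symm]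
          exact norm_sub_le_of_le hG hrest
      _ = S * B + C := by ring
  refine le_of_forall_pos_le_add fun δ hδ => ?_
  have hC : 0 ≤ C := sum_nonneg fun j _ => by positivity
  have hS : 0 < (C + 1) / δ := by positivity
  have h1 : ‖∑ j ∈ s with ν j = 0, a j‖ - B ≤ C / ((C + 1) / δ) := by
    rw [le_div_iff₀ hS]; linarith [hmean _ hS]
  have h2 : C / ((C + 1) / δ) ≤ δ := by
    rw [div_le_iff₀ hS, mul_div_cancel₀ _ hδ.ne']; linarith
  linarith

theorem ofReal_norm_sum_exp_mul_I_pow {ι : Type*} [Fintype ι] (φ : ι → ℝ) (p : ℕ) :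
    ((‖∑ i, cexp (φ i * I)‖ ^ (2 * p) : ℝ) : ℂ) =
      ∑ x : (Fin p → ι) × (Fin p → ι), cexp ((∑ j, φ (x.1 j) - ∑ j, φ (x.2 j) : ℝ) * I) := by
  have hconj (θ : ℝ) : (starRingEnd ℂ) (cexp (θ * I)) = cexp ((-θ : ℝ) * I) := by
    rw [← exp_conj, map_mul, conj_ofReal, conj_I, ofReal_neg, neg_mul, mul_neg]
  have hprod (u : Fin p → ι) (s : ℝ) :
      ∏ j, cexp ((s * φ (u j) : ℝ) * I) = cexp ((s * ∑ j, φ (u j) : ℝ) * I) := by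
    rw [← exp_sum, mul_sum, ofReal_sum, sum_mul]
  have hpow (s : ℝ) : (∑ i, cexp ((s * φ i : ℝ) * I)) ^ p =
      ∑ u : Fin p → ι, cexp ((s * ∑ j, φ (u j) : ℝ) * I) := by
    simp_rw [Fintype.sum_pow, hprod]
  have h1 := hpow 1
  have h2 := hpow (-1)
  simp only [one_mul, neg_one_mul] at h1 h2
  have hz : (starRingEnd ℂ) (∑ i, cexp (φ i * I)) = ∑ i, cexp ((-φ i : ℝ) * I) := by
    simp_rw [map_sum, hconj]
  rw [pow_mul, ofReal_pow, ofReal_pow, ← mul_conj', mul_pow, hz, h1, h2, sum_mul_sum,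
    ← Fintype.sum_prod_type']
  refine sum_congr rfl fun x _ => ?_
  rw [← exp_add, ← add_mul, ← ofReal_add, sub_eq_add_neg]

theorem card_filter_occurrences_eq_le {ι : Type*} [Fintype ι] [DecidableEq ι] {ω : ι → ℝ}
    (hω : AffineIndependent ℚ ω) (β : ι → ℝ) {T M : ℝ}
    (h : ∀ t, T < t → ‖∑ i, cexp ((2 * π * (t * ω i - β i) : ℝ) * I)‖ ≤ M) (p : ℕ) :
    (#{x : (Fin p → ι) × (Fin p → ι) | occurrences x.1 = occurrences x.2} : ℝ) ≤ M ^ (2 * p) := by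
  set Ω : (Fin p → ι) → ℝ := fun u => ∑ j, ω (u j)
  set B : (Fin p → ι) → ℝ := fun u => ∑ j, β (u j)
  have hexpand (t : ℝ) : ((‖∑ i, cexp ((2 * π * (t * ω i - β i) : ℝ) * I)‖ ^ (2 * p) : ℝ) : ℂ) =
      ∑ x : (Fin p → ι) × (Fin p → ι), cexp ((2 * π * (B x.2 - B x.1) : ℝ) * I) *
        cexp ((2 * π * (Ω x.1 - Ω x.2) : ℝ) * t * I) := by
    rw [ofReal_norm_sum_exp_mul_I_pow]
    refine sum_congr rfl fun x _ => ?_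
    rw [← exp_add, ← ofReal_mul, ← add_mul, ← ofReal_add]
    congr 3
    simp only [Ω, B, ← mul_sum, sum_sub_distrib]
    ring
  have hmean := norm_sum_filter_eq_zero_le_of_norm_sum_exp_le univ _ _ (T := T)
    (B := M ^ (2 * p)) fun t ht => by
      rw [← hexpand, norm_real, Real.norm_of_nonneg (by positivity)]
      exact pow_le_pow_left₀ (norm_nonneg _) (h t ht) _
  have hzero (x : (Fin p → ι) × (Fin p → ι)) :
      2 * π * (Ω x.1 - Ω x.2) = 0 ↔ occurrences x.1 = occurrences x.2 := by
    refine ⟨fun hx => occurrences_eq_of_sum_eq hω ?_, fun hx => ?_⟩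
    · have hπ : (2 * π : ℝ) ≠ 0 := by positivity
      exact sub_eq_zero.1 ((mul_eq_zero.1 hx).resolve_left hπ)
    · simp only [Ω, sum_comp_eq_sum_occurrences_smul ω, hx, sub_self, mul_zero]
  simp_rw [hzero] at hmean
  have hone (x : (Fin p → ι) × (Fin p → ι)) (hx : occurrences x.1 = occurrences x.2) :
      cexp ((2 * π * (B x.2 - B x.1) : ℝ) * I) = 1 := by
    simp only [B, sum_comp_eq_sum_occurrences_smul β, hx, sub_self, mul_zero, ofReal_zero,
      zero_mul, exp_zero]
  rwa [sum_congr rfl fun x hx => hone x (mem_filter.1 hx).2, sum_const, nsmul_one,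
    Complex.norm_natCast] at hmean

theorem exists_add_one_pow_mul_pow_lt_pow {a b : ℝ} (ha : 0 ≤ a) (hab : a < b) (d : ℕ) :
    ∃ p : ℕ, ((p : ℝ) + 1) ^ d * a ^ p < b ^ p := by
  have hb : 0 < b := ha.trans_lt hab
  have hr : |a / b| < 1 := by rwa [abs_of_nonneg (by positivity), div_lt_one hb]
  obtain ⟨p, hp, hp1⟩ := ((tendsto_pow_const_mul_const_pow_of_abs_lt_one d hr).eventually
    (gt_mem_nhds (by positivity : (0 : ℝ) < (2 ^ d)⁻¹))).and (Filter.eventually_ge_atTop 1)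
    |>.exists
  refine ⟨p, ?_⟩
  have hp2 : (p : ℝ) + 1 ≤ 2 * p := by
    have : (1 : ℝ) ≤ p := by exact_mod_cast hp1
    linarith
  calc ((p : ℝ) + 1) ^ d * a ^ p ≤ (2 * p) ^ d * a ^ p := by gcongr
    _ = 2 ^ d * ((p : ℝ) ^ d * (a / b) ^ p) * b ^ p := by
        rw [div_pow, mul_pow]; field_simp
    _ < 2 ^ d * (2 ^ d)⁻¹ * b ^ p := by gcongr
    _ = b ^ p := by rw [mul_inv_cancel₀ (by positivity), one_mul]

theorem exists_lt_norm_sum_exp {ι : Type*} [Fintype ι] {ω : ι → ℝ} (hω : AffineIndependent ℚ ω)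
    (β : ι → ℝ) (T : ℝ) {M : ℝ} (hM : M < Fintype.card ι) :
    ∃ t, T < t ∧ M < ‖∑ i, cexp ((2 * π * (t * ω i - β i) : ℝ) * I)‖ := by
  classical
  by_contra! h
  have hM0 : 0 ≤ M := (norm_nonneg _).trans (h (T + 1) (by linarith))
  obtain ⟨p, hp⟩ := exists_add_one_pow_mul_pow_lt_pow (sq_nonneg M)
    (pow_lt_pow_left₀ hM hM0 two_ne_zero) (Fintype.card ι)
  have hcount : ((Fintype.card ι : ℝ) ^ 2) ^ p ≤
      #(univ.image (occurrences (α := Fin p) (ι := ι))) *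
        #{x : (Fin p → ι) × (Fin p → ι) | occurrences x.1 = occurrences x.2} := by
    rw [← pow_mul, mul_comm 2, pow_mul]
    have := sq_card_le_card_image_mul_card_filter_eq (occurrences (α := Fin p) (ι := ι))
    rw [Fintype.card_fun, Fintype.card_fin] at this
    exact_mod_cast this
  have himage : (#(univ.image (occurrences (α := Fin p) (ι := ι))) : ℝ) ≤
      ((p : ℝ) + 1) ^ Fintype.card ι := by
    have := card_image_occurrences_le (α := Fin p) (ι := ι)
    rw [Fintype.card_fin] at this
    exact_mod_cast this
  have hpairs := card_filter_occurrences_eq_le hω β h p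
  rw [pow_mul] at hpairs
  have := hcount.trans (mul_le_mul himage hpairs (by positivity) (by positivity))
  linarith

theorem LinearIndependent.affineIndependent_option_elim {R V ι : Type*} [Ring R] [AddCommGroup V]
    [Module R V] {v : ι → V} (hv : LinearIndependent R v) :
    AffineIndependent R fun o : Option ι => o.elim 0 v := by
  classical
  rw [affineIndependent_iff_linearIndependent_vsub R _ none]
  refine (linearIndependent_equiv' (Equiv.optionSubtype none ⟨Equiv.refl _, rfl⟩) ?_).1 hv
  funext i
  simp

theorem norm_sum_le_norm_add_add_card_sub_two {ι : Type*} [Fintype ι] {z : ι → ℂ}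
    (hz : ∀ i, ‖z i‖ ≤ 1) {a b : ι} (hab : a ≠ b) : ‖∑ i, z i‖ ≤ ‖z a + z b‖ + (Fintype.card ι - 2) := by
  classical
  have hcard : #((univ.erase a).erase b) = Fintype.card ι - 2 := by
    rw [card_erase_of_mem (mem_erase.2 ⟨hab.symm, mem_univ b⟩), card_erase_of_mem (mem_univ a),
      card_univ, Nat.sub_sub]
  rw [← add_sum_erase _ _ (mem_univ a), ← add_sum_erase _ _ (mem_erase.2 ⟨hab.symm, mem_univ b⟩),
    ← add_assoc]
  refine (norm_add_le _ _).trans (add_le_add_right ((norm_sum_le _ _).trans ?_) _)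
  refine (sum_le_card_nsmul _ _ 1 fun i _ => hz i).trans ?_
  rw [hcard, nsmul_one, Nat.cast_sub]
  · norm_num
  · exact Fintype.one_lt_card_iff.2 ⟨a, b, hab⟩

theorem norm_one_add_exp_mul_I_sq (x : ℝ) : ‖1 + cexp (x * I)‖ ^ 2 = 2 + 2 * Real.cos x := by
  rw [Complex.sq_norm, normSq_apply, add_re, add_im, one_re, one_im, exp_ofReal_mul_I_re,
    exp_ofReal_mul_I_im]
  nlinarith [Real.sin_sq_add_cos_sq x]

theorem cos_two_pi_mul_le_of_le_abs_sub_round {x ε : ℝ} (hε : 0 ≤ ε) (h : ε ≤ |x - round x|) :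
    Real.cos (2 * π * x) ≤ Real.cos (2 * π * ε) := by
  have hπ := Real.pi_pos
  have hy : |x - round x| ≤ 1 / 2 := abs_sub_round x
  calc Real.cos (2 * π * x) = Real.cos (2 * π * (x - round x) + round x * (2 * π)) := by
        ring_nf
    _ = Real.cos (2 * π * |x - round x|) := by
        rw [Real.cos_add_int_mul_two_pi, ← Real.cos_abs, abs_mul, abs_of_pos (by positivity)]
    _ ≤ Real.cos (2 * π * ε) :=
        Real.cos_le_cos_of_nonneg_of_le_pi (by positivity) (by nlinarith) (by nlinarith)

theorem norm_one_add_exp_two_pi_mul_I_le {x ε : ℝ} (hε : 0 ≤ ε) (h : ε ≤ |x - round x|) :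
    ‖1 + cexp ((2 * π * x : ℝ) * I)‖ ≤ ‖1 + cexp ((2 * π * ε : ℝ) * I)‖ := by
  refine (pow_le_pow_iff_left₀ (norm_nonneg _) (norm_nonneg _) two_ne_zero).1 ?_
  rw [norm_one_add_exp_mul_I_sq, norm_one_add_exp_mul_I_sq]
  linarith [cos_two_pi_mul_le_of_le_abs_sub_round hε h]

theorem norm_one_add_exp_two_pi_mul_I_lt_two {ε : ℝ} (h0 : 0 < ε) (h1 : ε ≤ 1 / 2) :
    ‖1 + cexp ((2 * π * ε : ℝ) * I)‖ < 2 := by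
  have hπ := Real.pi_pos
  have hcos : Real.cos (2 * π * ε) < 1 := by
    rw [← Real.cos_zero]
    exact Real.cos_lt_cos_of_nonneg_of_le_pi le_rfl (by nlinarith) (by positivity)
  refine (pow_lt_pow_iff_left₀ (norm_nonneg _) zero_le_two two_ne_zero).1 ?_
  rw [norm_one_add_exp_mul_I_sq]
  linarith

theorem kronecker_general (k : ℕ) (ξ α : Fin k → ℝ) (hξ : LinearIndependent ℚ ξ)
    (T ε : ℝ) (hε : 0 < ε) :
    ∃ t : ℝ, T < t ∧ ∃ p : Fin k → ℤ,
      ∀ m : Fin k, |t * ξ m - p m - α m| ≤ ε := by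
  by_contra! hfar
  have hround (t : ℝ) (ht : T < t) : ∃ m, ε < |t * ξ m - α m - round (t * ξ m - α m)| := by
    obtain ⟨m, hm⟩ := hfar t ht fun m => round (t * ξ m - α m)
    exact ⟨m, by rwa [sub_right_comm] at hm⟩
  have hε2 : ε ≤ 1 / 2 := by
    obtain ⟨m, hm⟩ := hround (T + 1) (by linarith)
    exact hm.le.trans (abs_sub_round _)
  -- the index `none` carries the constant term `ξ₀ = α₀ = 0`
  obtain ⟨t, ht, hlt⟩ := exists_lt_norm_sum_exp hξ.affineIndependent_option_elim
    (fun o => o.elim 0 α) T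
    (M := ‖1 + cexp ((2 * π * ε : ℝ) * I)‖ + (Fintype.card (Option (Fin k)) - 2))
    (by linarith [norm_one_add_exp_two_pi_mul_I_lt_two hε hε2])
  obtain ⟨m, hm⟩ := hround t ht
  refine hlt.not_ge ((norm_sum_le_norm_add_add_card_sub_two (fun o => ?_) (a := none) (b := some m)
    (Option.some_ne_none m).symm).trans ?_)
  · exact (norm_exp_ofReal_mul_I _).le
  · simp only [Option.elim, mul_zero, sub_zero, ofReal_zero, zero_mul, exp_zero]
    gcongr
    exact norm_one_add_exp_two_pi_mul_I_le hε.le hm.le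

theorem kronecker (k : ℕ) (ξ α : Fin k → ℝ) (hξ : LinearIndependent ℚ ξ)
    (T ε : ℝ) (hT : 0 < T) (hε : 0 < ε) :
    ∃ t : ℝ, T < t ∧ ∃ p : Fin k → ℤ,
      ∀ m : Fin k, |t * ξ m - p m - α m| ≤ ε :=
  kronecker_general k ξ α hξ T ε hε
end

section
/- For every k ∈ ℕ and every a ∈ (0,1), there exist distinct positive speeds v_1 < v_2 < ... < v_k such that for all starting points β_1, ..., β_k ∈ [0,1) and every T > 0, there exists t > T such that (β_i + t·v_i) mod 1 ∈ [0, a] for all i = 1, ..., k. -/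
/-!
Proof by induction on the number of runners, adding a new fastest runner of speed `V`. Given a
time at which the first `k` runners lie in `[0, a/2]`, wait until the new runner next reaches `0`.
This takes at most `1 / V`, during which a runner of speed `v ≤ (a/2) V` advances by at most `a/2`,
so all `k + 1` runners lie in `[0, a]`.
-/

open Set

theorem Int.fract_add_le_fract_add {x d : ℝ} (hd : 0 ≤ d) : Int.fract (x + d) ≤ Int.fract x + d := by
  rw [Int.fract, Int.fract, sub_add_eq_add_sub]
  gcongr
  exact le_add_of_nonneg_right hd

@[simp]
theorem Int.fract_add_one_sub_fract (x : ℝ) : Int.fract (x + (1 - Int.fract x)) = 0 := by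
  rw [show x + (1 - Int.fract x) = ((⌊x⌋ + 1 : ℤ) : ℝ) by rw [Int.fract]; push_cast; ring,
    Int.fract_intCast]

def ShadeRecurrent {k : ℕ} (a : ℝ) (v : Fin k → ℝ) : Prop :=
  ∀ (β : Fin k → ℝ) (T : ℝ), ∃ t, T < t ∧ ∀ i, Int.fract (β i + t * v i) ∈ Icc 0 a

theorem ShadeRecurrent.of_isEmpty {a : ℝ} (v : Fin 0 → ℝ) : ShadeRecurrent a v :=
  fun _ T ↦ ⟨T + 1, lt_add_one T, finZeroElim⟩

theorem ShadeRecurrent.snoc {k : ℕ} {a V : ℝ} {v : Fin k → ℝ} (hv : ShadeRecurrent (a / 2) v)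
    (ha : 0 ≤ a) (hv₀ : ∀ i, 0 ≤ v i) (hV : 0 < V) (hvV : ∀ i, v i ≤ a / 2 * V) :
    ShadeRecurrent a (Fin.snoc v V : Fin (k + 1) → ℝ) := by
  intro β T
  obtain ⟨t, hTt, hβt⟩ := hv (fun i ↦ β i.castSucc) T
  set x := β (Fin.last k) + t * V
  set e := (1 - Int.fract x) / V
  have he₀ : 0 < e := div_pos (by linarith [Int.fract_lt_one x]) hV
  have heV : e * V ≤ 1 := by
    rw [div_mul_cancel₀ _ hV.ne']
    linarith [Int.fract_nonneg x]
  refine ⟨t + e, by linarith, Fin.lastCases ?_ fun i ↦ ?_⟩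
  · have hpos : β (Fin.last k) + (t + e) * V = x + (1 - Int.fract x) := by
      simp only [x, e]
      field_simp
      ring
    simp [hpos, ha]
  · have hdrift : e * v i ≤ a / 2 :=
      calc e * v i ≤ e * (a / 2 * V) := mul_le_mul_of_nonneg_left (hvV i) he₀.le
        _ = a / 2 * (e * V) := by ring
        _ ≤ a / 2 := mul_le_of_le_one_right (by positivity) heV
    have hpos : β i.castSucc + (t + e) * v i = (β i.castSucc + t * v i) + e * v i := by ring
    obtain ⟨-, hle⟩ := hβt i
    simp only [Fin.snoc_castSucc, hpos]
    refine ⟨Int.fract_nonneg _, ?_⟩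
    linarith [Int.fract_add_le_fract_add (x := β i.castSucc + t * v i) (mul_nonneg he₀.le (hv₀ i))]

theorem exists_strictMono_shadeRecurrent (k : ℕ) {a : ℝ} (ha : 0 < a) :
    ∃ v : Fin k → ℝ, StrictMono v ∧ (∀ i, 0 < v i) ∧ ShadeRecurrent a v := by
  induction k generalizing a with
  | zero => exact ⟨finZeroElim, fun i ↦ i.elim0, finZeroElim, .of_isEmpty _⟩
  | succ k ih =>
    obtain ⟨v, hmono, hpos, hrec⟩ := ih (half_pos ha)
    obtain ⟨M, hM₀, hvM⟩ : ∃ M, 0 < M ∧ ∀ i, v i ≤ M := by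
      obtain ⟨M, hM⟩ := Finite.bddAbove_range v
      exact ⟨max M 1, by positivity, fun i ↦ (hM (mem_range_self i)).trans (le_max_left _ _)⟩
    -- the summand `M` keeps `V` above every `v i` also when `a > 2`
    set V := M + 2 / a * M
    have hMV : M < V := lt_add_of_pos_right M (by positivity)
    have hvV : ∀ i, v i ≤ a / 2 * V := fun i ↦ (hvM i).trans <| by
      have : a / 2 * V = a / 2 * M + M := by
        simp only [V]
        field_simp
      linarith [mul_pos (half_pos ha) hM₀]
    refine ⟨Fin.snoc v V, ?_, Fin.lastCases ?_ fun i ↦ ?_, hrec.snoc ha.le (fun i ↦ (hpos i).le)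
      (hM₀.trans hMV) hvV⟩
    · rw [← Fin.insertNth_last', Fin.strictMono_insertNth_iff]
      exact ⟨hmono, fun i _ ↦ (hvM i).trans_lt hMV,
        fun i h ↦ absurd h (Fin.castSucc_lt_last i).not_ge⟩
    · simpa using hM₀.trans hMV
    · simpa using hpos i

theorem exists_speeds_in_shade_general (k : ℕ) (a : ℝ) (ha0 : 0 < a) :
    ∃ v : Fin k → ℝ, StrictMono v ∧ (∀ i, 0 < v i) ∧
      ∀ β : Fin k → ℝ, (∀ i, β i ∈ Set.Ico (0 : ℝ) 1) →
        ∀ T : ℝ, 0 < T → ∃ t : ℝ, T < t ∧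
          ∀ i, Int.fract (β i + t * v i) ∈ Set.Icc 0 a := by
  obtain ⟨v, hmono, hpos, hrec⟩ := exists_strictMono_shadeRecurrent k ha0
  exact ⟨v, hmono, hpos, fun β _ T _ ↦ hrec β T⟩

theorem exists_speeds_in_shade (k : ℕ) (a : ℝ) (ha0 : 0 < a) (ha1 : a < 1) :
    ∃ v : Fin k → ℝ, StrictMono v ∧ (∀ i, 0 < v i) ∧
      ∀ β : Fin k → ℝ, (∀ i, β i ∈ Set.Ico (0 : ℝ) 1) →
        ∀ T : ℝ, 0 < T → ∃ t : ℝ, T < t ∧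
          ∀ i, Int.fract (β i + t * v i) ∈ Set.Icc 0 a :=
  exists_speeds_in_shade_general k a ha0
end

section
/- Let 0 < a < 1 and v > 0. Suppose at time t a runner with speed (2/a)·v starts at an arbitrary point β ∈ [0,1) on the unit circle, and suppose a point moving at speed at most v lies in [0, a/2] at time t. Then there exists s ∈ [t, t + a/(2v)] such that the fast runner's position (β + s·(2v/a)) mod 1 lies in [0, a], and the slow point's position still lies in [0, a] at time s. -/
/-!
Starting at time `t`, the fast runner of speed `c = 2v/a` covers a full lap by time `t + 1/c`,
so it passes through the point `0` at some `s ≤ t + a/(2v)`. In that time the slow point,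
starting in `[0, a/2]`, advances by at most `v · a/(2v) = a/2`, so it is still in `[0, a]`;
as `a < 1` it has not wrapped around the circle.
-/

open Int

theorem Int.fract_add_of_fract_add_lt_one {R : Type*} [Ring R] [LinearOrder R]
    [IsStrictOrderedRing R] [FloorRing R] {x d : R} (hd : 0 ≤ d) (h : fract x + d < 1) :
    fract (x + d) = fract x + d :=
  fract_eq_iff.2 ⟨add_nonneg (fract_nonneg x) hd, h, ⌊x⌋, by rw [fract]; abel⟩

theorem exists_mem_Icc_fract_add_mul_eq_zero {c : ℝ} (hc : 0 < c) (β t : ℝ) :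
    ∃ s ∈ Set.Icc t (t + c⁻¹), fract (β + s * c) = 0 := by
  refine ⟨(⌈β + t * c⌉ - β) / c, ⟨?_, ?_⟩, ?_⟩
  · rw [le_div_iff₀ hc]
    linarith [le_ceil (β + t * c)]
  · rw [div_le_iff₀ hc, add_mul, inv_mul_cancel₀ hc.ne']
    linarith [ceil_lt_add_one (β + t * c)]
  · rw [div_mul_cancel₀ _ hc.ne', add_sub_cancel, fract_intCast]

theorem fast_runner_catches_general (a v : ℝ) (ha0 : 0 < a) (ha1 : a < 1) (hv : 0 < v)
    (t : ℝ) (β : ℝ)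
    (g : ℝ → ℝ) (hmono : Monotone g)
    (hspeed : ∀ s₁ s₂ : ℝ, s₁ ≤ s₂ → g s₂ - g s₁ ≤ v * (s₂ - s₁))
    (hg : Int.fract (g t) ∈ Set.Icc 0 (a / 2)) :
    ∃ s ∈ Set.Icc t (t + a / (2 * v)),
      Int.fract (β + s * (2 * v / a)) ∈ Set.Icc 0 a ∧
      Int.fract (g s) ∈ Set.Icc 0 a := by
  obtain ⟨s, ⟨hts, hst⟩, hfast⟩ :=
    exists_mem_Icc_fract_add_mul_eq_zero (by positivity : 0 < 2 * v / a) β t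
  rw [inv_div] at hst
  have hmove : g s - g t ≤ a / 2 :=
    calc g s - g t ≤ v * (s - t) := hspeed t s hts
      _ ≤ v * (a / (2 * v)) := by gcongr; linarith
      _ = a / 2 := by field_simp
  have hslow : fract (g s) = fract (g t) + (g s - g t) := by
    rw [← fract_add_of_fract_add_lt_one (sub_nonneg.2 (hmono hts)) (by linarith [hg.2]),
      add_sub_cancel]
  refine ⟨s, ⟨hts, hst⟩, by rw [hfast]; exact ⟨le_rfl, ha0.le⟩, ?_⟩
  rw [hslow]
  constructor <;> linarith [hg.1, hg.2, hmono hts]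

theorem fast_runner_catches (a v : ℝ) (ha0 : 0 < a) (ha1 : a < 1) (hv : 0 < v)
    (t : ℝ) (β : ℝ) (hβ : β ∈ Set.Ico (0 : ℝ) 1)
    (g : ℝ → ℝ) (hmono : Monotone g)
    (hspeed : ∀ s₁ s₂ : ℝ, s₁ ≤ s₂ → g s₂ - g s₁ ≤ v * (s₂ - s₁))
    (hg : Int.fract (g t) ∈ Set.Icc 0 (a / 2)) :
    ∃ s ∈ Set.Icc t (t + a / (2 * v)),
      Int.fract (β + s * (2 * v / a)) ∈ Set.Icc 0 a ∧
      Int.fract (g s) ∈ Set.Icc 0 a :=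
  fast_runner_catches_general a v ha0 ha1 hv t β g hmono hspeed hg
end
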